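/- arXiv:2506.13018 — 2 statements merged into one kernel-verified Lean document; each statement's English description precedes it below -/
import Mathlib

section
/- For a two-layer linear network loss L(W₂, W₁) = c(W₂W₁) where c is differentiable, the gradient flow (Ẇ₂, Ẇ₁) = (−∂L/∂W₂, −∂L/∂W₁) conserves the imbalance: d/dt [W₁W₁ᵀ − W₂ᵀW₂] = 0 along any solution. -/
open Matrix

attribute [local instance] Matrix.normedAddCommGroup Matrix.normedSpace

/-- Gradient flow on a two-layer linear network conserves the imbalance
`W₁ W₁ᵀ − W₂ᵀ W₂`. Here `E t = ∇c(W₂(t) W₁(t))` and the flow satisfies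
`Ẇ₂ = −E W₁ᵀ`, `Ẇ₁ = −W₂ᵀ E` (stated entrywise). -/
theorem gradient_flow_conserves_imbalance (m h n : ℕ)
    (W₂ : ℝ → Matrix (Fin m) (Fin h) ℝ) (W₁ : ℝ → Matrix (Fin h) (Fin n) ℝ)
    (c : Matrix (Fin m) (Fin n) ℝ → ℝ) (hc : Differentiable ℝ c)
    (E : ℝ → Matrix (Fin m) (Fin n) ℝ)
    (hW₂ : ∀ (t : ℝ) (i : Fin m) (j : Fin h),
      HasDerivAt (fun t => W₂ t i j) (-(E t * (W₁ t)ᵀ) i j) t)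
    (hW₁ : ∀ (t : ℝ) (i : Fin h) (j : Fin n),
      HasDerivAt (fun t => W₁ t i j) (-((W₂ t)ᵀ * E t) i j) t) :
    ∀ s t : ℝ,
      W₁ s * (W₁ s)ᵀ - (W₂ s)ᵀ * W₂ s
        = W₁ t * (W₁ t)ᵀ - (W₂ t)ᵀ * W₂ t := by
  intro s t
  ext i j
  simp only [Matrix.sub_apply]
  have key : ∀ (i j : Fin h),
      (fun u => (W₁ u * (W₁ u)ᵀ) i j - ((W₂ u)ᵀ * W₂ u) i j) s
        = (fun u => (W₁ u * (W₁ u)ᵀ) i j - ((W₂ u)ᵀ * W₂ u) i j) t := by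
    intro i j
    have hderiv : ∀ u : ℝ, HasDerivAt
        (fun u => (W₁ u * (W₁ u)ᵀ) i j - ((W₂ u)ᵀ * W₂ u) i j) 0 u := by
      intro u
      set D₁ : Matrix (Fin h) (Fin n) ℝ := -((W₂ u)ᵀ * E u) with hD₁
      set D₂ : Matrix (Fin m) (Fin h) ℝ := -(E u * (W₁ u)ᵀ) with hD₂
      have h1 : HasDerivAt (fun u => (W₁ u * (W₁ u)ᵀ) i j)
          ((D₁ * (W₁ u)ᵀ + W₁ u * D₁ᵀ) i j) u := by
        simp only [Matrix.mul_apply, Matrix.transpose_apply, Matrix.add_apply,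
          ← Finset.sum_add_distrib]
        exact HasDerivAt.fun_sum fun k _ => (hW₁ u i k).mul (hW₁ u j k)
      have h2 : HasDerivAt (fun u => ((W₂ u)ᵀ * W₂ u) i j)
          ((D₂ᵀ * W₂ u + (W₂ u)ᵀ * D₂) i j) u := by
        simp only [Matrix.mul_apply, Matrix.transpose_apply, Matrix.add_apply,
          ← Finset.sum_add_distrib]
        exact HasDerivAt.fun_sum fun k _ => (hW₂ u k i).mul (hW₂ u k j)
      have h3 := h1.sub h2
      have hz : (D₁ * (W₁ u)ᵀ + W₁ u * D₁ᵀ) i j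
          - (D₂ᵀ * W₂ u + (W₂ u)ᵀ * D₂) i j = 0 := by
        have : (D₁ * (W₁ u)ᵀ + W₁ u * D₁ᵀ)
            - (D₂ᵀ * W₂ u + (W₂ u)ᵀ * D₂) = 0 := by
          rw [hD₁, hD₂]
          simp [Matrix.transpose_mul, Matrix.transpose_neg, Matrix.mul_assoc,
            Matrix.neg_mul, Matrix.mul_neg]
          abel
        have := congrFun (congrFun this i) j
        simpa [Matrix.sub_apply] using this
      rwa [hz] at h3
    have hdiff : Differentiable ℝ
        (fun u => (W₁ u * (W₁ u)ᵀ) i j - ((W₂ u)ᵀ * W₂ u) i j) :=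
      fun u => (hderiv u).differentiableAt
    exact is_const_of_deriv_eq_zero hdiff (fun u => (hderiv u).deriv) s t
  exact key i j
end

section
/- Consider a two-layer network v^T σ(Wx) with loss L(v, W) = ∑_{x ∈ X} ℓ(v^T σ(Wx), y(x)), where the finite dataset X ⊆ ℝ^d is invariant under an orthogonal matrix g (i.e., gx ∈ X and y(gx) = y(x) for all x ∈ X). If Wg = W (the rows of W are g-invariant under right multiplication), then this property is preserved by gradient descent: for any step size η, W − η∇_W L(v, W) also satisfies (W − η∇_W L(v, W))g = W − η∇_W L(v, W). -/
open Matrix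

/-- The loss of a two-layer network `vᵀ σ(W x)` over a finite dataset. -/
noncomputable def twoLayerLoss {h d : ℕ} (s : ℝ → ℝ) (ℓ : ℝ → ℝ → ℝ)
    (X : Finset (Fin d → ℝ)) (y : (Fin d → ℝ) → ℝ) (v : Fin h → ℝ)
    (W : Matrix (Fin h) (Fin d) ℝ) : ℝ :=
  ∑ x ∈ X, ℓ (∑ i, v i * s ((W.mulVec x) i)) (y x)

/-- Entrywise gradient of the loss with respect to `W`. -/
noncomputable def gradW {h d : ℕ} (s : ℝ → ℝ) (ℓ : ℝ → ℝ → ℝ)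
    (X : Finset (Fin d → ℝ)) (y : (Fin d → ℝ) → ℝ) (v : Fin h → ℝ)
    (W : Matrix (Fin h) (Fin d) ℝ) : Matrix (Fin h) (Fin d) ℝ :=
  Matrix.of fun i j =>
    deriv (fun t : ℝ =>
      twoLayerLoss s ℓ X y v (W + t • Matrix.single i j 1)) 0

lemma gradW_apply {h d : ℕ} (s : ℝ → ℝ) (hs : Differentiable ℝ s) (ℓ : ℝ → ℝ → ℝ)
    (hℓ : ∀ y₀, Differentiable ℝ fun z => ℓ z y₀)
    (X : Finset (Fin d → ℝ)) (y : (Fin d → ℝ) → ℝ) (v : Fin h → ℝ)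
    (W : Matrix (Fin h) (Fin d) ℝ) (i : Fin h) (j : Fin d) :
    gradW s ℓ X y v W i j =
      ∑ x ∈ X, deriv (fun z => ℓ z (y x)) (∑ i', v i' * s (W.mulVec x i')) *
        (v i * deriv s (W.mulVec x i)) * x j := by
  have hrw : ∀ (x : Fin d → ℝ) (t : ℝ) (i' : Fin h),
      ((W + t • Matrix.single i j 1).mulVec x) i' =
        W.mulVec x i' + t * ((Matrix.single i j 1).mulVec x i') := by
    intro x t i'
    simp [Matrix.add_mulVec, Matrix.single_mulVec, Function.update,
      Matrix.smul_mulVec]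
  have hb : ∀ (x : Fin d → ℝ) (i' : Fin h),
      (Matrix.single i j 1).mulVec x i' = if i' = i then x j else 0 := by
    intro x i'
    simp [Matrix.single_mulVec, Function.update, eq_comm]
  have key : HasDerivAt (fun t : ℝ =>
      twoLayerLoss s ℓ X y v (W + t • Matrix.single i j 1))
      (∑ x ∈ X, deriv (fun z => ℓ z (y x)) (∑ i', v i' * s (W.mulVec x i')) *
        (v i * deriv s (W.mulVec x i)) * x j) 0 := by
    unfold twoLayerLoss
    apply HasDerivAt.fun_sum
    intro x _
    set a : Fin h → ℝ := W.mulVec x with ha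
    set b : Fin h → ℝ := (Matrix.single i j 1).mulVec x with hbdef
    have hinner : HasDerivAt (fun t : ℝ => ∑ i', v i' * s (a i' + t * b i'))
        (∑ i', v i' * (deriv s (a i') * b i')) 0 := by
      apply HasDerivAt.fun_sum
      intro i' _
      have h1 : HasDerivAt (fun t : ℝ => a i' + t * b i') (b i') 0 := by
        simpa using ((hasDerivAt_id (0:ℝ)).mul_const (b i')).const_add (a i')
      have h2 : HasDerivAt s (deriv s (a i')) (a i' + 0 * b i') := by
        simpa using (hs (a i')).hasDerivAt
      simpa [mul_assoc] using (h2.comp 0 h1).const_mul (v i')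
    have houter : HasDerivAt (fun z => ℓ z (y x))
        (deriv (fun z => ℓ z (y x)) (∑ i', v i' * s (a i')))
        ((fun t : ℝ => ∑ i', v i' * s (a i' + t * b i')) 0) := by
      have := (hℓ (y x) (∑ i', v i' * s (a i'))).hasDerivAt
      simpa using this
    have hcomp := houter.comp 0 hinner
    have heq : (fun t : ℝ => ℓ (∑ i', v i' * s (((W + t • Matrix.single i j 1).mulVec x) i')) (y x)) =
        (fun z => ℓ z (y x)) ∘ (fun t : ℝ => ∑ i', v i' * s (a i' + t * b i')) := by
      funext t
      simp only [Function.comp_apply, hrw]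
      rfl
    have hsum : (∑ i', v i' * (deriv s (a i') * b i')) = v i * deriv s (a i) * x j := by
      rw [Finset.sum_eq_single i]
      · simp [hbdef, hb, mul_assoc]
      · intro i' _ hi'; simp [hbdef, hb, hi']
      · simp
    rw [hsum] at hcomp
    rw [heq]
    convert hcomp using 1
    · rfl
    ring
  exact key.deriv

/-- If the finite dataset is invariant under an orthogonal matrix `g`
(with labels preserved), and `W` is invariant under right multiplication
by `g`, then a gradient descent step preserves this invariance. -/
theorem data_symmetry_preserved_by_gradient_descent {h d : ℕ}
    (s : ℝ → ℝ) (hs : Differentiable ℝ s) (ℓ : ℝ → ℝ → ℝ)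
    (hℓ : ∀ y₀, Differentiable ℝ fun z => ℓ z y₀)
    (X : Finset (Fin d → ℝ)) (y : (Fin d → ℝ) → ℝ)
    (g : Matrix (Fin d) (Fin d) ℝ) (hg : gᵀ * g = 1)
    (hX : ∀ x ∈ X, g.mulVec x ∈ X)
    (hy : ∀ x ∈ X, y (g.mulVec x) = y x)
    (v : Fin h → ℝ) (W : Matrix (Fin h) (Fin d) ℝ)
    (hW : W * g = W) (η : ℝ) :
    (W - η • gradW s ℓ X y v W) * g = W - η • gradW s ℓ X y v W := by
  have hginj : Function.Injective (g.mulVec) := by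
    intro u w huw
    have h1 := congrArg (gᵀ.mulVec) huw
    simpa [Matrix.mulVec_mulVec, hg] using h1
  have himg : X.image g.mulVec = X :=
    Finset.eq_of_subset_of_card_le
      (fun z hz => by
        obtain ⟨x, hx, rfl⟩ := Finset.mem_image.mp hz
        exact hX x hx)
      (le_of_eq (Finset.card_image_of_injective X hginj).symm)
  have hW' : ∀ x : Fin d → ℝ, W.mulVec (g.mulVec x) = W.mulVec x := by
    intro x; rw [Matrix.mulVec_mulVec, hW]
  have hgtg : ∀ x : Fin d → ℝ, ∀ j : Fin d, ∑ k, (g.mulVec x) k * g k j = x j := by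
    intro x j
    have h1 : (g.mulVec x) ᵥ* g = x := by
      rw [← Matrix.mulVec_transpose, Matrix.mulVec_mulVec, hg, Matrix.one_mulVec]
    have h2 : ((g.mulVec x) ᵥ* g) j = ∑ k, (g.mulVec x) k * g k j := by
      simp [Matrix.vecMul, dotProduct]
    rw [← h2, h1]
  have hGg : gradW s ℓ X y v W * g = gradW s ℓ X y v W := by
    ext i j
    rw [Matrix.mul_apply]
    simp only [gradW_apply s hs ℓ hℓ]
    simp only [Finset.sum_mul]
    rw [Finset.sum_comm]
    conv_lhs => rw [← himg, Finset.sum_image (fun a _ b _ hab => hginj hab)]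
    refine Finset.sum_congr rfl fun x hx => ?_
    rw [hW' x, hy x hx]
    simp only [mul_assoc, ← Finset.mul_sum]
    rw [hgtg]
  rw [Matrix.sub_mul, Matrix.smul_mul, hW, hGg]
end
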